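/- Let F be a field of characteristic not 2 or 3, let k ∈ F be nonzero, and let K = F[z]/(z² − k), a quadratic étale F-algebra, with norm map N = Algebra.norm from K to F (K being free of rank 2 over F). Let V(F)_{4k} denote the set of integer-matrix binary cubic forms over F with reduced discriminant equal to 4k, equipped with the SL₂(F)-action by linear change of variable. Then there is a bijection between the set of SL₂(F)-orbits on V(F)_{4k} and the group (K*/K*³)_{N=1}, i.e., the kernel of the group homomorphism K^×/(K^×)³ → F^×/(F^×)³ induced by the norm N. -/

import Mathlib

/-!
Write `K = F[ω]` with `ω² = k`. The cubic form `f_z(x, y) = im (z · (x + y ω)³)` attached to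
`z ∈ K` has Hessian `N(z) · (-x² + k y²)` and discriminant `4k · N(z)²`. Conversely, the
Hessian `H` of a form of discriminant `4k` is a binary quadratic form of discriminant `4k`,
and the syzygy `G² + 4H³ = disc · f²` shows that `-H` takes a norm value; so `SL₂(F)` moves
the Hessian to `-x² + k y²`, and a form with that Hessian is `f_z` with `N(z) = 1`. The
elements of `SL₂(F)` fixing `-x² + k y²` are the multiplications by norm-one `w ∈ K`, which
send `f_z` to `f_{z w³}`. Hence the orbits correspond to `U / U³`, where `U` is the group of
norm-one units. Since `N(c) = c²` for `c ∈ F`, every class of `K^×/K^×³` whose norm lies in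
`F^×³` contains an element of `U`, and an element of `U` that is a cube in `K^×` is a cube
in `U`: thus `U / U³` is the kernel of `K^×/K^×³ → F^×/F^×³`.
-/

open Matrix MatrixGroups

/-- An (integer-matrix) binary cubic form over `R`: the quadruple `(a,b,c,d)` stands for
`f(x,y) = a·x³ + 3b·x²y + 3c·xy² + d·y³`. -/
abbrev BCF (R : Type*) := R × R × R × R

/-- The reduced discriminant `disc(f) = a²d² − 3b²c² − 6abcd + 4ac³ + 4b³d` of the
integer-matrix binary cubic form `(a,b,c,d)`. -/
def bcfDisc {R : Type*} [CommRing R] (f : BCF R) : R :=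
  f.1 ^ 2 * f.2.2.2 ^ 2 - 3 * f.2.1 ^ 2 * f.2.2.1 ^ 2
    - 6 * f.1 * f.2.1 * f.2.2.1 * f.2.2.2 + 4 * f.1 * f.2.2.1 ^ 3 + 4 * f.2.1 ^ 3 * f.2.2.2

/-- The value `f(x,y)` of the integer-matrix binary cubic form `f = (a,b,c,d)`. -/
def bcfVal {R : Type*} [CommRing R] (f : BCF R) (x y : R) : R :=
  f.1 * x ^ 3 + 3 * f.2.1 * x ^ 2 * y + 3 * f.2.2.1 * x * y ^ 2 + f.2.2.2 * y ^ 3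

/-- The action of a 2×2 matrix `γ = ((p,q),(r,s))` on integer-matrix binary cubic forms
by linear change of variable, `(γ·f)(x,y) = f(px+qy, rx+sy)`, written in coordinates. -/
def bcfAct {R : Type*} [CommRing R] (γ : Matrix (Fin 2) (Fin 2) R) (f : BCF R) : BCF R :=
  (f.1 * γ 0 0 ^ 3 + 3 * f.2.1 * γ 0 0 ^ 2 * γ 1 0 + 3 * f.2.2.1 * γ 0 0 * γ 1 0 ^ 2
     + f.2.2.2 * γ 1 0 ^ 3,
   f.1 * γ 0 0 ^ 2 * γ 0 1 + f.2.1 * (γ 0 0 ^ 2 * γ 1 1 + 2 * γ 0 0 * γ 0 1 * γ 1 0)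
     + f.2.2.1 * (2 * γ 0 0 * γ 1 0 * γ 1 1 + γ 0 1 * γ 1 0 ^ 2) + f.2.2.2 * γ 1 0 ^ 2 * γ 1 1,
   f.1 * γ 0 0 * γ 0 1 ^ 2 + f.2.1 * (2 * γ 0 0 * γ 0 1 * γ 1 1 + γ 0 1 ^ 2 * γ 1 0)
     + f.2.2.1 * (γ 0 0 * γ 1 1 ^ 2 + 2 * γ 0 1 * γ 1 0 * γ 1 1) + f.2.2.2 * γ 1 0 * γ 1 1 ^ 2,
   f.1 * γ 0 1 ^ 3 + 3 * f.2.1 * γ 0 1 ^ 2 * γ 1 1 + 3 * f.2.2.1 * γ 0 1 * γ 1 1 ^ 2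
     + f.2.2.2 * γ 1 1 ^ 3)

/-- The action is by substitution: `(γ·f)(x,y) = f(px+qy, rx+sy)`. -/
theorem bcfAct_val {R : Type*} [CommRing R] (γ : Matrix (Fin 2) (Fin 2) R) (f : BCF R)
    (x y : R) : bcfVal (bcfAct γ f) x y
      = bcfVal f (γ 0 0 * x + γ 0 1 * y) (γ 1 0 * x + γ 1 1 * y) := by
  simp only [bcfAct, bcfVal]; ring

theorem bcfAct_one {R : Type*} [CommRing R] (f : BCF R) : bcfAct (1 : Matrix (Fin 2) (Fin 2) R) f = f := by
  obtain ⟨a, b, c, d⟩ := f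
  simp [bcfAct, Matrix.one_apply]

theorem bcfAct_mul {R : Type*} [CommRing R] (g h : Matrix (Fin 2) (Fin 2) R) (f : BCF R) :
    bcfAct (g * h) f = bcfAct h (bcfAct g f) := by
  obtain ⟨a, b, c, d⟩ := f
  simp only [bcfAct, Matrix.mul_apply, Fin.sum_univ_two, Prod.mk.injEq]
  refine ⟨by ring, by ring, by ring, by ring⟩

noncomputable section

open Polynomial

/-- The quadratic étale algebra `K = F[z]/(z² − k)`. -/
abbrev QuadAlg (F : Type*) [Field F] (k : F) : Type _ :=
  AdjoinRoot (Polynomial.X ^ 2 - Polynomial.C k : Polynomial F)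

variable (F : Type*) [Field F] (k : F)

/-- The subgroup of cubes in the unit group of a commutative monoid. -/
def cubes (M : Type*) [CommGroup M] : Subgroup M := (powMonoidHom 3 : M →* M).range

/-- The norm map `K^× → F^×` on units, induced by `Algebra.norm`. -/
def normUnits : (QuadAlg F k)ˣ →* Fˣ := Units.map (Algebra.norm F : QuadAlg F k →* F)

/-- The homomorphism `K^×/(K^×)³ → F^×/(F^×)³` induced by the norm. -/
def normOnCubeClasses : (QuadAlg F k)ˣ ⧸ cubes (QuadAlg F k)ˣ →* Fˣ ⧸ cubes Fˣ :=
  QuotientGroup.map _ _ (normUnits F k) (by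
    rintro x ⟨y, rfl⟩
    exact ⟨normUnits F k y, by
      rw [powMonoidHom_apply, powMonoidHom_apply, map_pow]⟩)

/-- `V(F)_{4k}`: integer-matrix binary cubic forms over `F` of reduced discriminant `4k`. -/
abbrev V4k := {f : BCF F // bcfDisc f = 4 * k}

/-- Two forms of discriminant `4k` are equivalent if they differ by the action of an
element of `SL₂(F)`. -/
def orbitRel : V4k F k → V4k F k → Prop := fun f g =>
  ∃ γ : Matrix.SpecialLinearGroup (Fin 2) F,
    bcfAct (γ : Matrix (Fin 2) (Fin 2) F) f.1 = g.1


section CubicForms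

variable {R : Type*} [CommRing R]

def bcfHessA (f : BCF R) : R := f.1 * f.2.2.1 - f.2.1 ^ 2

def bcfHessB (f : BCF R) : R := f.1 * f.2.2.2 - f.2.1 * f.2.2.1

def bcfHessC (f : BCF R) : R := f.2.1 * f.2.2.2 - f.2.2.1 ^ 2

theorem bcfHess_discrim (f : BCF R) :
    bcfHessB f ^ 2 - 4 * bcfHessA f * bcfHessC f = bcfDisc f := by
  simp only [bcfHessA, bcfHessB, bcfHessC, bcfDisc]; ring

theorem bcfHessA_act (γ : Matrix (Fin 2) (Fin 2) R) (f : BCF R) :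
    bcfHessA (bcfAct γ f) = γ.det ^ 2 *
      (bcfHessA f * γ 0 0 ^ 2 + bcfHessB f * γ 0 0 * γ 1 0 + bcfHessC f * γ 1 0 ^ 2) := by
  simp only [bcfHessA, bcfHessB, bcfHessC, bcfAct, det_fin_two]; ring

theorem bcfHessB_act (γ : Matrix (Fin 2) (Fin 2) R) (f : BCF R) :
    bcfHessB (bcfAct γ f) = γ.det ^ 2 *
      (2 * bcfHessA f * γ 0 0 * γ 0 1 + bcfHessB f * (γ 0 0 * γ 1 1 + γ 0 1 * γ 1 0)
        + 2 * bcfHessC f * γ 1 0 * γ 1 1) := by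
  simp only [bcfHessA, bcfHessB, bcfHessC, bcfAct, det_fin_two]; ring

theorem bcfHessC_act (γ : Matrix (Fin 2) (Fin 2) R) (f : BCF R) :
    bcfHessC (bcfAct γ f) = γ.det ^ 2 *
      (bcfHessA f * γ 0 1 ^ 2 + bcfHessB f * γ 0 1 * γ 1 1 + bcfHessC f * γ 1 1 ^ 2) := by
  simp only [bcfHessA, bcfHessB, bcfHessC, bcfAct, det_fin_two]; ring

theorem bcfDisc_act (γ : Matrix (Fin 2) (Fin 2) R) (f : BCF R) :
    bcfDisc (bcfAct γ f) = γ.det ^ 6 * bcfDisc f := by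
  rw [← bcfHess_discrim, ← bcfHess_discrim, bcfHessA_act, bcfHessB_act, bcfHessC_act,
    det_fin_two]
  ring

theorem bcfDisc_act_sl (γ : SL(2, R)) (f : BCF R) : bcfDisc (bcfAct γ f) = bcfDisc f := by
  rw [bcfDisc_act, γ.det_coe, one_pow, one_mul]

theorem bcfAct_sl_mul (γ δ : SL(2, R)) (f : BCF R) :
    bcfAct ((γ * δ : SL(2, R)) : Matrix (Fin 2) (Fin 2) R) f = bcfAct δ (bcfAct γ f) :=
  bcfAct_mul _ _ f

/-- The syzygy `G² + 4H³ = disc · f²` between a cubic form, its Hessian and its cubic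
covariant, evaluated at `(1, 0)`. -/
theorem bcf_syzygy (f : BCF R) :
    (f.1 ^ 2 * f.2.2.2 - 3 * f.1 * f.2.1 * f.2.2.1 + 2 * f.2.1 ^ 3) ^ 2 + 4 * bcfHessA f ^ 3
      = f.1 ^ 2 * bcfDisc f := by
  simp only [bcfHessA, bcfDisc]; ring

end CubicForms

section CubeForm

open QuadraticAlgebra

variable {R : Type*} [CommRing R] (k : R)

/-- The form `(x, y) ↦ im (z · (x + y ω)³)`. -/
def cubeForm (z : QuadraticAlgebra R k 0) : BCF R := (z.im, z.re, k * z.im, k * z.re)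

theorem cubeForm_injective : Function.Injective (cubeForm k) := by
  intro z w h
  simp only [cubeForm, Prod.mk.injEq] at h
  exact QuadraticAlgebra.ext h.2.1 h.1

theorem bcfHessA_cubeForm (z : QuadraticAlgebra R k 0) : bcfHessA (cubeForm k z) = -z.norm := by
  simp only [bcfHessA, cubeForm, QuadraticAlgebra.norm_def]; ring

theorem bcfHessB_cubeForm (z : QuadraticAlgebra R k 0) : bcfHessB (cubeForm k z) = 0 := by
  simp only [bcfHessB, cubeForm]; ring

theorem bcfHessC_cubeForm (z : QuadraticAlgebra R k 0) :
    bcfHessC (cubeForm k z) = k * z.norm := by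
  simp only [bcfHessC, cubeForm, QuadraticAlgebra.norm_def]; ring

theorem bcfDisc_cubeForm (z : QuadraticAlgebra R k 0) :
    bcfDisc (cubeForm k z) = 4 * k * z.norm ^ 2 := by
  simp only [bcfDisc, cubeForm, QuadraticAlgebra.norm_def]; ring

/-- The matrix is that of multiplication by `w` in the basis `(1, ω)`. -/
theorem bcfAct_cubeForm (z w : QuadraticAlgebra R k 0) :
    bcfAct !![w.re, k * w.im; w.im, w.re] (cubeForm k z) = cubeForm k (z * w ^ 3) := by
  simp only [bcfAct, cubeForm, pow_succ, pow_zero, one_mul, re_mul, im_mul, of_apply, cons_val',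
    cons_val_zero, cons_val_one, cons_val_fin_one, Prod.mk.injEq]
  refine ⟨by ring, by ring, by ring, by ring⟩

theorem exists_eq_cubeForm_of_hess {k : R} {f : BCF R}
    (hA : bcfHessA f = -1) (hB : bcfHessB f = 0) (hC : bcfHessC f = k) :
    ∃ z : QuadraticAlgebra R k 0, z.norm = 1 ∧ f = cubeForm k z := by
  obtain ⟨a, b, c, d⟩ := f
  simp only [bcfHessA, bcfHessB, bcfHessC] at hA hB hC
  have hc : c = k * a := by linear_combination c * hA - b * hB + a * hC
  have hd : d = k * b := by linear_combination d * hA - c * hB + b * hC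
  refine ⟨⟨b, a⟩, ?_, ?_⟩
  · simp only [QuadraticAlgebra.norm_def]
    linear_combination -hA + a * hc
  · simp [cubeForm, hc, hd]

end CubeForm

section SL2Reduction

variable {F k}

theorem entries_eq_of_preserves_norm {p q r s : F} (hdet : p * s - q * r = 1)
    (hA : p ^ 2 - k * r ^ 2 = 1) (hB : p * q - k * r * s = 0) : s = p ∧ q = k * r := by
  have hs : s = p := by linear_combination p * hdet + r * hB - s * hA
  subst hs
  exact ⟨rfl, by linear_combination (-(q - k * r)) * hdet + s * hB - q * (hA - hdet)⟩

theorem exists_eq_mul_cube_of_bcfAct_cubeForm (h2 : (2 : F) ≠ 0)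
    {z z' : QuadraticAlgebra F k 0} (hz : z.norm = 1) (hz' : z'.norm = 1) (γ : SL(2, F))
    (h : bcfAct γ (cubeForm k z) = cubeForm k z') :
    ∃ w : QuadraticAlgebra F k 0, w.norm = 1 ∧ z' = z * w ^ 3 := by
  have hdet : γ 0 0 * γ 1 1 - γ 0 1 * γ 1 0 = 1 := by rw [← det_fin_two]; exact γ.det_coe
  have hA := bcfHessA_act (γ : Matrix (Fin 2) (Fin 2) F) (cubeForm k z)
  have hB := bcfHessB_act (γ : Matrix (Fin 2) (Fin 2) F) (cubeForm k z)
  simp only [h, γ.det_coe, bcfHessA_cubeForm, bcfHessB_cubeForm, bcfHessC_cubeForm, hz, hz']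
    at hA hB
  obtain ⟨hs, hq⟩ := entries_eq_of_preserves_norm (k := k) hdet (by linear_combination hA)
    ((mul_eq_zero.mp (by linear_combination hB : (2 : F) * _ = 0)).resolve_left h2)
  refine ⟨⟨γ 0 0, γ 1 0⟩, by simp only [QuadraticAlgebra.norm_def]; linear_combination hA,
    cubeForm_injective k ?_⟩
  rw [← h, ← bcfAct_cubeForm]
  congr 1
  ext i j
  fin_cases i <;> fin_cases j <;> simp [hs, hq]

theorem exists_sl_bcfHessA_ne_zero {f : BCF F} (hf : bcfDisc f ≠ 0) :
    ∃ γ : SL(2, F), bcfHessA (bcfAct γ f) ≠ 0 := by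
  by_cases hA : bcfHessA f = 0
  · by_cases hC : bcfHessC f = 0
    · have hB : bcfHessB f ≠ 0 := by
        rintro hB
        apply hf
        rw [← bcfHess_discrim, hA, hB]
        ring
      refine ⟨⟨!![1, 0; 1, 1], by simp [det_fin_two]⟩, ?_⟩
      simpa [bcfHessA_act, det_fin_two, hA, hC] using hB
    · refine ⟨⟨!![0, -1; 1, 0], by simp [det_fin_two]⟩, ?_⟩
      simpa [bcfHessA_act, det_fin_two] using hC
  · exact ⟨1, by simpa [bcfAct_one] using hA⟩

theorem exists_sl_bcfHessB_eq_zero (h2 : (2 : F) ≠ 0) {f : BCF F} (hA : bcfHessA f ≠ 0) :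
    ∃ γ : SL(2, F), bcfHessA (bcfAct γ f) = bcfHessA f ∧ bcfHessB (bcfAct γ f) = 0 := by
  refine ⟨⟨!![1, -bcfHessB f / (2 * bcfHessA f); 0, 1], by simp [det_fin_two]⟩, ?_, ?_⟩
  · simp [bcfHessA_act, det_fin_two]
  · simp [bcfHessB_act, det_fin_two]
    field_simp
    ring

theorem exists_sl_bcfHess_eq (h2 : (2 : F) ≠ 0) {f : BCF F} (hA : bcfHessA f ≠ 0)
    (hB : bcfHessB f = 0) (hf : bcfDisc f = 4 * k) :
    ∃ γ : SL(2, F), bcfHessA (bcfAct γ f) = -1 ∧ bcfHessB (bcfAct γ f) = 0 ∧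
      bcfHessC (bcfAct γ f) = k := by
  set A := bcfHessA f with hAdef
  have hAC : A * bcfHessC f = -k := by
    have h := bcfHess_discrim f
    rw [hB, hf] at h
    have h4 : (4 : F) ≠ 0 := by rw [show (4 : F) = 2 * 2 by norm_num]; exact mul_ne_zero h2 h2
    exact mul_left_cancel₀ h4 (by linear_combination -h)
  -- By the syzygy, `-A` is the norm of `w₁ + w₂ ω`.
  obtain ⟨w₁, w₂, hw⟩ : ∃ w₁ w₂ : F, w₁ ^ 2 - k * w₂ ^ 2 = -A := by
    refine ⟨(f.1 ^ 2 * f.2.2.2 - 3 * f.1 * f.2.1 * f.2.2.1 + 2 * f.2.1 ^ 3) / (2 * A),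
      f.1 / A, ?_⟩
    have hsyz := bcf_syzygy f
    rw [hf] at hsyz
    field_simp
    linear_combination hsyz
  have hC : bcfHessC f = -k / A := by rw [eq_div_iff hA, mul_comm, hAC]
  have hdet : -w₁ / A * w₁ - k * w₂ / A * -w₂ = 1 := by
    field_simp
    linear_combination -hw
  refine ⟨⟨!![-w₁ / A, k * w₂ / A; -w₂, w₁], by simpa [det_fin_two] using hdet⟩,
    ?_, ?_, ?_⟩ <;>
    simp only [bcfHessA_act, bcfHessB_act, bcfHessC_act, det_fin_two, of_apply, cons_val',
      cons_val_zero, cons_val_one, cons_val_fin_one, hdet, hB, hC, ← hAdef] <;>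
    field_simp
  · linear_combination hw
  · ring
  · linear_combination -k * hw

theorem exists_sl_bcfAct_eq_cubeForm (h2 : (2 : F) ≠ 0) (hk : k ≠ 0) {f : BCF F}
    (hf : bcfDisc f = 4 * k) :
    ∃ γ : SL(2, F), ∃ z : QuadraticAlgebra F k 0,
      z.norm = 1 ∧ bcfAct γ f = cubeForm k z := by
  obtain ⟨γ₁, hA₁⟩ := exists_sl_bcfHessA_ne_zero (f := f) (by
    rw [hf, show (4 : F) = 2 * 2 by norm_num]; exact mul_ne_zero (mul_ne_zero h2 h2) hk)
  obtain ⟨γ₂, hA₂, hB₂⟩ := exists_sl_bcfHessB_eq_zero h2 hA₁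
  obtain ⟨γ₃, hA₃, hB₃, hC₃⟩ := exists_sl_bcfHess_eq h2 (hA₂ ▸ hA₁) hB₂
    (by rw [bcfDisc_act_sl, bcfDisc_act_sl, hf])
  obtain ⟨z, hz, hfz⟩ := exists_eq_cubeForm_of_hess hA₃ hB₃ hC₃
  exact ⟨γ₁ * γ₂ * γ₃, z, hz, by rw [bcfAct_sl_mul, bcfAct_sl_mul, hfz]⟩

end SL2Reduction

section CubeClasses

variable {G H : Type*} [CommGroup G] [CommGroup H] (N : G →* H) (s : H →* G)

theorem mem_cubes {x : G} : x ∈ cubes G ↔ ∃ y, y ^ 3 = x := Iff.rfl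

def normOneCubeClass : N.ker →* G ⧸ cubes G := (QuotientGroup.mk' (cubes G)).comp N.ker.subtype

/-- A cube `μ³` of norm one is the cube of `s (N μ) * μ`, which has norm one. -/
theorem ker_normOneCubeClass (hs : ∀ c, N (s c) = c ^ 2) :
    (normOneCubeClass N).ker = cubes N.ker := by
  ext u
  simp only [normOneCubeClass, MonoidHom.mem_ker, MonoidHom.comp_apply, QuotientGroup.mk'_apply,
    QuotientGroup.eq_one_iff, Subgroup.coe_subtype, mem_cubes]
  constructor
  · rintro ⟨μ, hμ⟩
    have hNμ : N μ ^ 3 = 1 := by rw [← map_pow, hμ]; exact u.2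
    refine ⟨⟨s (N μ) * μ, ?_⟩, Subtype.ext ?_⟩
    · rw [MonoidHom.mem_ker, map_mul, hs, ← pow_succ, hNμ]
    · rw [Subgroup.coe_pow, mul_pow, ← map_pow, hNμ, map_one, one_mul, hμ]
  · rintro ⟨ν, rfl⟩
    exact ⟨ν, rfl⟩

/-- A class whose norm is a cube `c³` contains `δ * (s c * δ⁻¹)³`, which has norm one. -/
theorem range_normOneCubeClass (hs : ∀ c, N (s c) = c ^ 2)
    (hN : cubes G ≤ (cubes H).comap N) :
    (normOneCubeClass N).range = (QuotientGroup.map _ _ N hN).ker := by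
  ext t
  constructor
  · rintro ⟨u, rfl⟩
    simp [normOneCubeClass, MonoidHom.mem_ker.mp u.2]
  · intro ht
    obtain ⟨δ, rfl⟩ := QuotientGroup.mk_surjective t
    rw [MonoidHom.mem_ker, QuotientGroup.map_mk, QuotientGroup.eq_one_iff] at ht
    obtain ⟨c, hc⟩ := mem_cubes.mp ht
    refine ⟨⟨δ * (s c * δ⁻¹) ^ 3, ?_⟩, ?_⟩
    · rw [MonoidHom.mem_ker, map_mul, map_pow, map_mul, map_inv, hs, ← hc]
      group
    · simp only [normOneCubeClass, MonoidHom.comp_apply, Subgroup.coe_subtype,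
        QuotientGroup.mk'_apply, QuotientGroup.mk_mul]
      rw [(QuotientGroup.eq_one_iff _).mpr (mem_cubes.mpr ⟨_, rfl⟩), mul_one]

def kerMapCubesMulEquiv (hs : ∀ c, N (s c) = c ^ 2) (hN : cubes G ≤ (cubes H).comap N) :
    N.ker ⧸ cubes N.ker ≃* (QuotientGroup.map _ _ N hN).ker :=
  (QuotientGroup.quotientMulEquivOfEq (ker_normOneCubeClass N s hs)).symm.trans <|
    (QuotientGroup.quotientKerEquivRange _).trans <|
      MulEquiv.subgroupCongr (range_normOneCubeClass N s hs hN)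

end CubeClasses

open QuadraticAlgebra

theorem QuadraticAlgebra.algebraNorm_eq_norm {R : Type*} [CommRing R] {a b : R}
    (z : QuadraticAlgebra R a b) : Algebra.norm R z = z.norm := by
  rw [Algebra.norm_apply, ← det_toLinearMap_eq_norm]
  rfl

def quadAlgEquiv : QuadAlg F k ≃ₐ[F] QuadraticAlgebra F k 0 :=
  AlgEquiv.ofAlgHom
    (AdjoinRoot.liftAlgHom _ (Algebra.ofId F _) ω (by simp [omega_mul_omega_eq_algebraMap, sq]))
    (QuadraticAlgebra.lift ⟨AdjoinRoot.root _, by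
      have h := AdjoinRoot.eval₂_root (X ^ 2 - C k : F[X])
      simp only [eval₂_sub, eval₂_X_pow, eval₂_C, sub_eq_zero] at h
      simp [← sq, h, Algebra.smul_def]⟩)
    (QuadraticAlgebra.algHom_ext (by simp))
    (AdjoinRoot.algHom_ext (by simp))

theorem norm_quadAlgEquiv (x : QuadAlg F k) : (quadAlgEquiv F k x).norm = Algebra.norm F x := by
  rw [← algebraNorm_eq_norm, Algebra.norm_eq_of_algEquiv]

theorem mem_ker_normUnits_iff (u : (QuadAlg F k)ˣ) :
    u ∈ (normUnits F k).ker ↔ (quadAlgEquiv F k u).norm = 1 := by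
  rw [MonoidHom.mem_ker, norm_quadAlgEquiv, ← Units.val_eq_one]
  rfl

theorem normUnits_algebraMap (c : Fˣ) :
    normUnits F k (Units.map (algebraMap F (QuadAlg F k)).toMonoidHom c) = c ^ 2 := by
  ext
  simp only [normUnits, Units.coe_map, Units.val_pow_eq_pow_val]
  change Algebra.norm F (algebraMap F (QuadAlg F k) c) = c ^ 2
  rw [Algebra.norm_algebraMap, (quadAlgEquiv F k).toLinearEquiv.finrank_eq,
    finrank_eq_two]

theorem exists_mem_ker_normUnits {z : QuadraticAlgebra F k 0} (hz : z.norm = 1) :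
    ∃ u ∈ (normUnits F k).ker, quadAlgEquiv F k u = z := by
  have hunit : IsUnit ((quadAlgEquiv F k).symm z) :=
    (isUnit_iff_norm_isUnit.mpr (hz ▸ isUnit_one)).map _
  exact ⟨hunit.unit, (mem_ker_normUnits_iff F k _).mpr (by simpa using hz), by simp⟩

def normOneForm (u : (normUnits F k).ker) : V4k F k :=
  ⟨cubeForm k (quadAlgEquiv F k (u : (QuadAlg F k)ˣ)), by
    rw [bcfDisc_cubeForm, (mem_ker_normUnits_iff F k u).mp u.2]; ring⟩

theorem orbitRel_equivalence : Equivalence (orbitRel F k) where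
  refl f := ⟨1, bcfAct_one f.1⟩
  symm := by
    rintro f g ⟨γ, hγ⟩
    refine ⟨γ⁻¹, ?_⟩
    rw [← hγ, ← bcfAct_sl_mul, mul_inv_cancel]
    exact bcfAct_one _
  trans := by
    rintro f g h ⟨γ, hγ⟩ ⟨δ, hδ⟩
    exact ⟨γ * δ, by rw [bcfAct_sl_mul, hγ, hδ]⟩

theorem orbitRel_normOneForm_of_mem_cubes {u v : (normUnits F k).ker}
    (h : u⁻¹ * v ∈ cubes (normUnits F k).ker) :
    orbitRel F k (normOneForm F k u) (normOneForm F k v) := by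
  obtain ⟨w, hw⟩ := mem_cubes.mp h
  have hv : v = u * w ^ 3 := by rw [hw, mul_inv_cancel_left]
  set z := quadAlgEquiv F k (w : (QuadAlg F k)ˣ)
  have hdet : !![z.re, k * z.im; z.im, z.re].det = 1 := by
    rw [det_fin_two_of, ← (mem_ker_normUnits_iff F k w).mp w.2, QuadraticAlgebra.norm_def]
    ring
  refine ⟨⟨_, hdet⟩, ?_⟩
  simp only [normOneForm, bcfAct_cubeForm, hv]
  simp [z]

theorem mem_cubes_of_orbitRel_normOneForm (h2 : (2 : F) ≠ 0) {u v : (normUnits F k).ker}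
    (h : orbitRel F k (normOneForm F k u) (normOneForm F k v)) :
    u⁻¹ * v ∈ cubes (normUnits F k).ker := by
  obtain ⟨γ, hγ⟩ := h
  obtain ⟨z, hz, hvz⟩ := exists_eq_mul_cube_of_bcfAct_cubeForm h2
    ((mem_ker_normUnits_iff F k u).mp u.2) ((mem_ker_normUnits_iff F k v).mp v.2) γ hγ
  obtain ⟨w, hw, rfl⟩ := exists_mem_ker_normUnits F k hz
  refine mem_cubes.mpr ⟨⟨w, hw⟩, ?_⟩
  rw [eq_inv_mul_iff_mul_eq]
  ext
  apply (quadAlgEquiv F k).injective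
  simpa using hvz.symm

theorem exists_orbitRel_normOneForm (h2 : (2 : F) ≠ 0) (hk : k ≠ 0) (f : V4k F k) :
    ∃ u, orbitRel F k f (normOneForm F k u) := by
  obtain ⟨γ, z, hz, hγ⟩ := exists_sl_bcfAct_eq_cubeForm h2 hk f.2
  obtain ⟨u, hu, rfl⟩ := exists_mem_ker_normUnits F k hz
  exact ⟨⟨u, hu⟩, γ, hγ⟩

def orbitsEquivNormOneCubes (h2 : (2 : F) ≠ 0) (hk : k ≠ 0) :
    Quot (orbitRel F k) ≃ (normUnits F k).ker ⧸ cubes (normUnits F k).ker :=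
  .symm <| .ofBijective
    (Quotient.lift (fun u => Quot.mk _ (normOneForm F k u)) fun _ _ h =>
      Quot.sound (orbitRel_normOneForm_of_mem_cubes F k (QuotientGroup.leftRel_apply.mp h)))
    ⟨by
      rintro ⟨u⟩ ⟨v⟩ h
      exact QuotientGroup.eq.mpr (mem_cubes_of_orbitRel_normOneForm F k h2
        ((orbitRel_equivalence F k).eqvGen_iff.mp (Quot.eqvGen_exact h))),
    by
      rintro ⟨f⟩
      obtain ⟨u, hu⟩ := exists_orbitRel_normOneForm F k h2 hk f
      exact ⟨u, (Quot.sound hu).symm⟩⟩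

theorem orbits_biject_with_norm_one_classes
    (h2 : (2 : F) ≠ 0) (hk : k ≠ 0) :
    Nonempty (Quot (orbitRel F k) ≃ (normOnCubeClasses F k).ker) :=
  ⟨(orbitsEquivNormOneCubes F k h2 hk).trans
    (kerMapCubesMulEquiv (normUnits F k) _ (normUnits_algebraMap F k) _).toEquiv⟩
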